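/- arXiv:math/0607044 — 3 statements merged into one kernel-verified Lean document; each statement's English description precedes it below -/
import Mathlib

section
/- Let T be an isotropic centered real Gaussian field on a compact connected Abelian group G and let a_π = ∫_G T(g) χ_π(g⁻¹) dg. If π, σ ∈ Ĝ satisfy π ∉ {σ, σ⁻¹}, then E[a_π · conj(a_σ)] = 0 and E[a_π · a_σ] = 0. -/
open MeasureTheory ProbabilityTheory Complex

/-! By Fubini, `E[a_ψ a_χ]` is the integral over `G × G` of `ψ g * χ h * K g h`, where
`K g h = E[T g * T h]`. Isotropy makes `K` invariant under the diagonal translation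
`(g, h) ↦ (x g, x h)`, which multiplies the rest of the integrand by `(ψ χ) x`; since Haar measure
on `G × G` is invariant under this translation, the integral vanishes unless `ψ χ = 1`.
Both claims are the case `ψ = π⁻¹`, with `χ = σ` (as `conj (σ g⁻¹) = σ g`) and `χ = σ⁻¹`. -/

theorem integral_eq_zero_of_mul_left_eq_smul {G E : Type*} [Group G] [MeasurableSpace G]
    [MeasurableMul G] [NormedAddCommGroup E] [NormedSpace ℂ E] {μ : Measure G}
    [μ.IsMulLeftInvariant] {f : G → E} {x : G} {a : ℂ} (ha : a ≠ 1)
    (hf : ∀ g, f (x * g) = a • f g) : ∫ g, f g ∂μ = 0 := by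
  have h := integral_mul_left_eq_self (μ := μ) f x
  simp_rw [hf, integral_smul] at h
  have : (a - 1) • ∫ g, f g ∂μ = 0 := by rw [sub_smul, h, one_smul, sub_self]
  exact (smul_eq_zero.mp this).resolve_left (sub_ne_zero.mpr ha)

theorem integral_mul_mul_left_of_map_eq {G Ω : Type*} [Mul G] [MeasurableSpace Ω]
    {P : Measure Ω} {T : G → Ω → ℝ} (hT : ∀ g, Measurable (T g))
    (hiso : ∀ (x : G) (g : Fin 2 → G),
      P.map (fun ω i => T (x * g i) ω) = P.map (fun ω i => T (g i) ω))
    (x g h : G) : ∫ ω, T (x * g) ω * T (x * h) ω ∂P = ∫ ω, T g ω * T h ω ∂P := by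
  have hlaw : IdentDistrib (fun ω i => T (x * ![g, h] i) ω) (fun ω i => T (![g, h] i) ω) P P :=
    ⟨(measurable_pi_lambda _ fun _ => hT _).aemeasurable,
      (measurable_pi_lambda _ fun _ => hT _).aemeasurable, hiso x ![g, h]⟩
  simpa using (hlaw.comp ((measurable_pi_apply 0).mul (measurable_pi_apply 1))).integral_eq

section SecondMoment

variable {α Ω : Type*} [MeasurableSpace α] [MeasurableSpace Ω] {μ : Measure α}
  [IsProbabilityMeasure μ] {P : Measure Ω} [SFinite P] {T : α → Ω → ℝ}

theorem integrable_mul_of_memLp_two (hT : MemLp (fun p : α × Ω => T p.1 p.2) 2 (μ.prod P)) :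
    Integrable (fun q : Ω × (α × α) => T q.2.1 q.1 * T q.2.2 q.1) (P.prod (μ.prod μ)) := by
  have h₁ : MemLp (fun q : Ω × (α × α) => T q.2.1 q.1) 2 (P.prod (μ.prod μ)) :=
    hT.comp_measurePreserving
      (Measure.measurePreserving_swap.comp ((MeasurePreserving.id P).prod measurePreserving_fst))
  have h₂ : MemLp (fun q : Ω × (α × α) => T q.2.2 q.1) 2 (P.prod (μ.prod μ)) :=
    hT.comp_measurePreserving
      (Measure.measurePreserving_swap.comp ((MeasurePreserving.id P).prod measurePreserving_snd))
  exact memLp_one_iff_integrable.mp (h₂.smul h₁ (p := 2) (q := 2) (r := 1))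

theorem integral_mul_integral_eq_integral_prod
    (hT : MemLp (fun p : α × Ω => T p.1 p.2) 2 (μ.prod P)) {f k : α → ℂ}
    (hf : Measurable f) (hk : Measurable k) (hf₁ : ∀ x, ‖f x‖ ≤ 1) (hk₁ : ∀ x, ‖k x‖ ≤ 1) :
    ∫ ω, (∫ x, (T x ω : ℂ) * f x ∂μ) * (∫ y, (T y ω : ℂ) * k y ∂μ) ∂P
      = ∫ p : α × α, f p.1 * k p.2 * ((∫ ω, T p.1 ω * T p.2 ω ∂P : ℝ) : ℂ) ∂(μ.prod μ) := by
  set Φ : Ω × (α × α) → ℂ := fun q => f q.2.1 * k q.2.2 * ((T q.2.1 q.1 * T q.2.2 q.1 : ℝ) : ℂ)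
  have hΦ : Integrable Φ (P.prod (μ.prod μ)) :=
    (integrable_mul_of_memLp_two hT).ofReal.bdd_mul (c := 1)
      ((hf.comp (measurable_fst.comp measurable_snd)).mul
        (hk.comp (measurable_snd.comp measurable_snd))).aestronglyMeasurable
      (Filter.Eventually.of_forall fun q => by
        simpa [norm_mul] using mul_le_one₀ (hf₁ q.2.1) (norm_nonneg _) (hk₁ q.2.2))
  calc ∫ ω, (∫ x, (T x ω : ℂ) * f x ∂μ) * (∫ y, (T y ω : ℂ) * k y ∂μ) ∂P
      = ∫ ω, ∫ p, Φ (ω, p) ∂(μ.prod μ) ∂P := by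
        congr 1; funext ω
        rw [← integral_prod_mul]
        congr 1; funext p
        simp only [Φ]; push_cast; ring
    _ = ∫ p, ∫ ω, Φ (ω, p) ∂P ∂(μ.prod μ) := integral_integral_swap hΦ
    _ = _ := by
        congr 1; funext p
        simp only [Φ]
        rw [integral_const_mul]
        exact congrArg _ integral_ofReal

end SecondMoment

instance Prod.instMeasurableMul {M N : Type*} [Mul M] [Mul N] [MeasurableSpace M]
    [MeasurableSpace N] [MeasurableMul M] [MeasurableMul N] : MeasurableMul (M × N) where
  measurable_const_mul c := (measurable_const_mul c.1).prodMap (measurable_const_mul c.2)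
  measurable_mul_const c := (measurable_mul_const c.1).prodMap (measurable_mul_const c.2)

theorem integral_fourierCoeff_mul_fourierCoeff_eq_zero {G Ω : Type*} [Group G]
    [TopologicalSpace G] [MeasurableSpace G] [OpensMeasurableSpace G] [MeasurableMul G]
    {μ : Measure G} [μ.IsMulLeftInvariant] [IsProbabilityMeasure μ]
    [MeasurableSpace Ω] {P : Measure Ω} [SFinite P] {T : G → Ω → ℝ}
    (hT : MemLp (fun p : G × Ω => T p.1 p.2) 2 (μ.prod P))
    (hcov : ∀ x g h : G, ∫ ω, T (x * g) ω * T (x * h) ω ∂P = ∫ ω, T g ω * T h ω ∂P)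
    {ψ χ : PontryaginDual G} (hψχ : ψ * χ ≠ 1) :
    ∫ ω, (∫ g, (T g ω : ℂ) * ψ g ∂μ) * (∫ g, (T g ω : ℂ) * χ g ∂μ) ∂P = 0 := by
  obtain ⟨x, hx⟩ : ∃ x, ψ x * χ x ≠ 1 := by
    by_contra! h
    exact hψχ (PontryaginDual.ext h)
  have hmeas (φ : PontryaginDual G) : Measurable fun g => (φ g : ℂ) :=
    (continuous_subtype_val.comp (map_continuous φ)).measurable
  rw [integral_mul_integral_eq_integral_prod hT (hmeas ψ) (hmeas χ)
    (fun _ => (Circle.norm_coe _).le) (fun _ => (Circle.norm_coe _).le)]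
  refine integral_eq_zero_of_mul_left_eq_smul (x := (x, x)) (a := ((ψ x * χ x : Circle) : ℂ))
    (mt Circle.coe_eq_one.mp hx) ?_
  rintro ⟨g, h⟩
  simp only [Prod.mk_mul_mk, map_mul, Circle.coe_mul, hcov, smul_eq_mul]
  ring

theorem fourier_coeff_orthogonal_general
    {G : Type*} [CommGroup G] [TopologicalSpace G] [IsTopologicalGroup G]
    [MeasurableSpace G] [BorelSpace G]
    (μG : Measure G) [μG.IsHaarMeasure] [IsProbabilityMeasure μG]
    {Ω : Type*} [MeasurableSpace Ω] (P : Measure Ω) [IsProbabilityMeasure P]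
    (T : G → Ω → ℝ)
    (hmeas : Measurable (Function.uncurry T))
    (hL2 : MemLp (fun p : G × Ω => T p.1 p.2) 2 (μG.prod P))
    (hiso : ∀ (h : G) (n : ℕ) (g : Fin n → G),
      P.map (fun ω i => T (h * g i) ω) = P.map (fun ω (i : Fin n) => T (g i) ω))
    (π σ : PontryaginDual G) (hne : π ≠ σ) (hne' : π ≠ σ⁻¹) :
    (∫ ω, (∫ g, (T g ω : ℂ) * ((π g⁻¹ : Circle) : ℂ) ∂μG)
        * starRingEnd ℂ (∫ g, (T g ω : ℂ) * ((σ g⁻¹ : Circle) : ℂ) ∂μG) ∂P) = 0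
    ∧ (∫ ω, (∫ g, (T g ω : ℂ) * ((π g⁻¹ : Circle) : ℂ) ∂μG)
        * (∫ g, (T g ω : ℂ) * ((σ g⁻¹ : Circle) : ℂ) ∂μG) ∂P) = 0 := by
  have hcov := integral_mul_mul_left_of_map_eq (T := T)
    (fun g => hmeas.comp measurable_prodMk_left) (fun x => hiso x 2)
  have hinv (χ : PontryaginDual G) (g : G) :
      ((χ g⁻¹ : Circle) : ℂ) = (χ⁻¹ : PontryaginDual G) g := by
    rw [map_inv]; rfl
  have hconj (ω : Ω) : starRingEnd ℂ (∫ g, (T g ω : ℂ) * ((σ g⁻¹ : Circle) : ℂ) ∂μG)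
      = ∫ g, (T g ω : ℂ) * σ g ∂μG := by
    rw [← integral_conj]
    simp [← Circle.coe_inv_eq_conj]
  simp_rw [hconj, hinv]
  exact ⟨integral_fourierCoeff_mul_fourierCoeff_eq_zero hL2 hcov (mt inv_mul_eq_one.mp hne),
    integral_fourierCoeff_mul_fourierCoeff_eq_zero hL2 hcov (mt inv_mul_eq_one.mp hne')⟩

/-- For an isotropic centered Gaussian field `T` on a compact connected
Abelian group `G` with Fourier coefficients `a_π = ∫ T(g) χ_π(g⁻¹) dg`, if
`π ∉ {σ, σ⁻¹}` then `E[a_π ⬝ conj(a_σ)] = 0` and `E[a_π ⬝ a_σ] = 0`. -/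
theorem fourier_coeff_orthogonal
    {G : Type*} [CommGroup G] [TopologicalSpace G] [IsTopologicalGroup G]
    [CompactSpace G] [ConnectedSpace G] [SecondCountableTopology G]
    [MeasurableSpace G] [BorelSpace G]
    (μG : Measure G) [μG.IsHaarMeasure] [IsProbabilityMeasure μG]
    {Ω : Type*} [MeasurableSpace Ω] (P : Measure Ω) [IsProbabilityMeasure P]
    (T : G → Ω → ℝ)
    (hmeas : Measurable (Function.uncurry T))
    (hL2 : MemLp (fun p : G × Ω => T p.1 p.2) 2 (μG.prod P))
    (hcent : ∀ g, ∫ ω, T g ω ∂P = 0)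
    (hGauss : ∀ (n : ℕ) (g : Fin n → G) (c : Fin n → ℝ),
      ∃ m v, P.map (fun ω => ∑ i, c i * T (g i) ω) = gaussianReal m v)
    (hiso : ∀ (h : G) (n : ℕ) (g : Fin n → G),
      P.map (fun ω i => T (h * g i) ω) = P.map (fun ω (i : Fin n) => T (g i) ω))
    (π σ : PontryaginDual G) (hne : π ≠ σ) (hne' : π ≠ σ⁻¹) :
    (∫ ω, (∫ g, (T g ω : ℂ) * ((π g⁻¹ : Circle) : ℂ) ∂μG)
        * starRingEnd ℂ (∫ g, (T g ω : ℂ) * ((σ g⁻¹ : Circle) : ℂ) ∂μG) ∂P) = 0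
    ∧ (∫ ω, (∫ g, (T g ω : ℂ) * ((π g⁻¹ : Circle) : ℂ) ∂μG)
        * (∫ g, (T g ω : ℂ) * ((σ g⁻¹ : Circle) : ℂ) ∂μG) ∂P) = 0 :=
  fourier_coeff_orthogonal_general μG P T hmeas hL2 hiso π σ hne hne'
end

section
/- Let h(x) = h₀ + h₁x + ... + h_p x^{p−1} be a polynomial strictly positive on positive integers, ϑ > 0, and suppose c₁ h(|l|) e^{−ϑ|l|} ≤ C_l ≤ c₂ h(|l|) e^{−ϑ|l|} for all l ∈ ℤ\{0}, with C₀ = 0 and 0 < c₁ < c₂. Then there exists c₁₂ > 0 such that for all sufficiently large integers l: Ĉ_{l,2} := ∑_{k∈ℤ} C_k C_{l−k} ≥ ∑_{k=1}^{l−1} C_k C_{l−k} ≥ c₁₂ · l^{2p+1} e^{−ϑ l}. -/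
/-! The upper bound makes `C` summable (polynomial times geometric decay), so the full
convolution sum dominates its partial sum over `0 < k < l`. For the lower bound, positivity of
`h` on the positive integers forces its leading coefficient `a` to be positive, so
`h(x) ≥ (a/2) x^p` for large `x`. For the roughly `l/4` indices `l/4 < k ≤ l/2` both `k` and
`l - k` are at least `l/4`, and `e^{-ϑk} e^{-ϑ(l-k)} = e^{-ϑl}`, so each such term is at least
`(c₁ a/2)² (l/4)^{2p} e^{-ϑl}`. -/

open Filter Finset Polynomial Real Asymptotics Topology

namespace Polynomial

theorem tendsto_eval_div_pow_natDegree (P : ℝ[X]) :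
    Tendsto (fun x => P.eval x / x ^ P.natDegree) atTop (𝓝 P.leadingCoeff) := by
  refine (P.isEquivalent_atTop_lead.div IsEquivalent.refl).symm.tendsto_nhds ?_
  refine tendsto_const_nhds.congr' ?_
  filter_upwards [eventually_gt_atTop 0] with x hx
  rw [Pi.div_apply, mul_div_cancel_right₀ _ (pow_pos hx _).ne']

theorem leadingCoeff_pos_of_eval_natCast_pos {P : ℝ[X]}
    (hpos : ∀ n : ℕ, 0 < n → 0 < P.eval (n : ℝ)) : 0 < P.leadingCoeff := by
  have hP : P ≠ 0 := by
    rintro rfl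
    simpa using hpos 1 one_pos
  refine (leadingCoeff_ne_zero.mpr hP).symm.lt_of_le (ge_of_tendsto
    (P.tendsto_eval_div_pow_natDegree.comp tendsto_natCast_atTop_atTop) ?_)
  filter_upwards [eventually_gt_atTop 0] with n hn
  exact (div_pos (hpos n hn) (pow_pos (Nat.cast_pos.mpr hn) _)).le

theorem eventually_mul_pow_natDegree_le_eval {P : ℝ[X]} {c : ℝ} (hc : c < P.leadingCoeff) :
    ∀ᶠ x in atTop, c * x ^ P.natDegree ≤ P.eval x := by
  filter_upwards [P.tendsto_eval_div_pow_natDegree.eventually_const_lt hc,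
    eventually_gt_atTop 0] with x hx hx0
  exact (lt_div_iff₀ (pow_pos hx0 _)).mp hx |>.le

theorem summable_eval_mul_exp_neg_mul (P : ℝ[X]) {ϑ : ℝ} (hϑ : 0 < ϑ) :
    Summable fun n : ℕ => P.eval (n : ℝ) * exp (-ϑ * n) := by
  simp_rw [eval_eq_sum_range, sum_mul, mul_assoc]
  exact summable_sum fun i _ => (summable_pow_mul_exp_neg_nat_mul i hϑ).mul_left _

end Polynomial

theorem summable_comp_abs_intCast {g : ℝ → ℝ} (hg : Summable fun n : ℕ => g n) :
    Summable fun k : ℤ => g |(k : ℝ)| :=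
  .of_nat_of_neg (by simpa using hg) (by simpa using hg)

theorem summable_of_nonneg_of_le_eval_abs_mul_exp {C : ℤ → ℝ} (hC : ∀ l, 0 ≤ C l)
    (h : ℝ[X]) {ϑ c : ℝ} (hϑ : 0 < ϑ)
    (hupp : ∀ l : ℤ, l ≠ 0 → C l ≤ c * h.eval |(l : ℝ)| * exp (-ϑ * |(l : ℝ)|)) :
    Summable C := by
  have hmajor : Summable fun l : ℤ => c * h.eval |(l : ℝ)| * exp (-ϑ * |(l : ℝ)|) :=
    summable_comp_abs_intCast (g := fun x => c * h.eval x * exp (-ϑ * x)) <| by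
      simpa only [mul_assoc] using (h.summable_eval_mul_exp_neg_mul hϑ).mul_left c
  refine Summable.of_norm_bounded_eventually (f := C) hmajor ?_
  filter_upwards [eventually_cofinite_ne 0] with l hl
  rw [norm_of_nonneg (hC l)]
  exact hupp l hl

theorem summable_mul_sub_of_nonneg {f g : ℤ → ℝ} (hf : Summable f) (hg : Summable g)
    (hf0 : ∀ k, 0 ≤ f k) (hg0 : ∀ k, 0 ≤ g k) (l : ℤ) :
    Summable fun k => f k * g (l - k) :=
  .of_nonneg_of_le (fun k => mul_nonneg (hf0 k) (hg0 _))
    (fun k => mul_le_mul_of_nonneg_left (hg.le_tsum _ fun j _ => hg0 j) (hf0 k))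
    (hf.mul_right _)

theorem div_eight_le_card_Ioc_div_four_div_two {l : ℤ} (hl : 8 ≤ l) :
    (l : ℝ) / 8 ≤ #(Ioc (l / 4) (l / 2)) := by
  have hcard : (#(Ioc (l / 4) (l / 2)) : ℤ) = l / 2 - l / 4 := by
    rw [Int.card_Ioc]
    omega
  have h8 : l ≤ 8 * (#(Ioc (l / 4) (l / 2)) : ℤ) := by
    rw [hcard]
    omega
  rw [div_le_iff₀ (by norm_num), mul_comm]
  exact_mod_cast h8

section ConvolutionLowerBound

variable {C : ℤ → ℝ} {b ϑ : ℝ} {p : ℕ} {K : ℤ}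

theorem mul_pow_sq_mul_exp_le_mul_sub (hb : 0 ≤ b)
    (hK : ∀ k, K ≤ k → b * (k : ℝ) ^ p * exp (-ϑ * k) ≤ C k) {k l : ℤ} (hk : K ≤ k)
    (hlk : K ≤ l - k) {m : ℝ} (hm : 0 ≤ m) (hmk : m ≤ k) (hmlk : m ≤ l - k) :
    (b * m ^ p) ^ 2 * exp (-ϑ * l) ≤ C k * C (l - k) := by
  have hweaken : ∀ j, K ≤ j → m ≤ j → b * m ^ p * exp (-ϑ * j) ≤ C j := fun j hKj hmj =>
    le_trans (by gcongr) (hK j hKj)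
  have hexp : exp (-ϑ * l) = exp (-ϑ * k) * exp (-ϑ * ((l - k : ℤ) : ℝ)) := by
    rw [← exp_add]
    push_cast
    ring_nf
  calc (b * m ^ p) ^ 2 * exp (-ϑ * l)
      = (b * m ^ p * exp (-ϑ * k)) * (b * m ^ p * exp (-ϑ * ((l - k : ℤ) : ℝ))) := by
        rw [hexp]
        ring
    _ ≤ C k * C (l - k) :=
        mul_le_mul (hweaken k hk hmk) (hweaken _ hlk (by push_cast; exact hmlk))
          (by positivity) ((hweaken k hk hmk).trans' (by positivity))

theorem eventually_le_sum_Ioo_mul_sub (hC : ∀ k, 0 ≤ C k) (hb : 0 ≤ b)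
    (hlow : ∀ᶠ k : ℤ in atTop, b * (k : ℝ) ^ p * exp (-ϑ * k) ≤ C k) :
    ∀ᶠ l : ℤ in atTop, b ^ 2 / (8 * 4 ^ (2 * p)) * (l : ℝ) ^ (2 * p + 1) * exp (-ϑ * l)
      ≤ ∑ k ∈ Ioo 0 l, C k * C (l - k) := by
  obtain ⟨K, hK⟩ := eventually_atTop.mp hlow
  filter_upwards [eventually_ge_atTop (4 * K + 4), eventually_ge_atTop 8] with l hlK hl8
  have hl : (0 : ℝ) ≤ l / 4 := by
    have : (0 : ℝ) ≤ l := by exact_mod_cast (by omega : (0 : ℤ) ≤ l)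
    positivity
  have hterm : ∀ k ∈ Ioc (l / 4) (l / 2),
      (b * ((l : ℝ) / 4) ^ p) ^ 2 * exp (-ϑ * l) ≤ C k * C (l - k) := by
    intro k hk
    rw [mem_Ioc] at hk
    have hk4 : (l : ℝ) ≤ 4 * k := by exact_mod_cast (by omega : l ≤ 4 * k)
    have hlk4 : (l : ℝ) ≤ 4 * (l - k) := by exact_mod_cast (by omega : l ≤ 4 * (l - k))
    exact mul_pow_sq_mul_exp_le_mul_sub hb hK (by omega) (by omega) hl (by linarith)
      (by linarith)
  calc b ^ 2 / (8 * 4 ^ (2 * p)) * (l : ℝ) ^ (2 * p + 1) * exp (-ϑ * l)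
      = (l : ℝ) / 8 * ((b * ((l : ℝ) / 4) ^ p) ^ 2 * exp (-ϑ * l)) := by
        rw [mul_pow, div_pow, div_pow, ← pow_mul, ← pow_mul, mul_comm p 2]
        field_simp
        ring
    _ ≤ #(Ioc (l / 4) (l / 2)) * ((b * ((l : ℝ) / 4) ^ p) ^ 2 * exp (-ϑ * l)) := by
        gcongr
        exact div_eight_le_card_Ioc_div_four_div_two hl8
    _ ≤ ∑ k ∈ Ioc (l / 4) (l / 2), C k * C (l - k) := by
        rw [← nsmul_eq_mul]
        exact card_nsmul_le_sum _ _ _ hterm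
    _ ≤ ∑ k ∈ Ioo 0 l, C k * C (l - k) :=
        sum_le_sum_of_subset_of_nonneg (fun k hk => by simp only [mem_Ioc, mem_Ioo] at hk ⊢; omega)
          fun k _ _ => mul_nonneg (hC k) (hC _)

end ConvolutionLowerBound

theorem conv_lower_bound_exponential_general
    (C : ℤ → ℝ) (hC : ∀ l, 0 ≤ C l)
    (h : Polynomial ℝ) (p : ℕ) (hdeg : h.natDegree = p)
    (hpos : ∀ n : ℕ, 0 < n → 0 < h.eval (n : ℝ))
    (ϑ c₁ c₂ : ℝ) (hϑ : 0 < ϑ) (hc₁ : 0 < c₁)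
    (hlow : ∀ l : ℤ, l ≠ 0 → c₁ * h.eval |(l : ℝ)| * Real.exp (-ϑ * |(l : ℝ)|) ≤ C l)
    (hupp : ∀ l : ℤ, l ≠ 0 → C l ≤ c₂ * h.eval |(l : ℝ)| * Real.exp (-ϑ * |(l : ℝ)|)) :
    ∃ c₁₂ : ℝ, 0 < c₁₂ ∧ ∃ L : ℤ, ∀ l : ℤ, L ≤ l →
      (∑' k : ℤ, C k * C (l - k)) ≥ (∑ k ∈ Finset.Ioo (0 : ℤ) l, C k * C (l - k))
      ∧ (∑ k ∈ Finset.Ioo (0 : ℤ) l, C k * C (l - k))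
          ≥ c₁₂ * (l : ℝ) ^ (2 * p + 1) * Real.exp (-ϑ * (l : ℝ)) := by
  subst hdeg
  have hsum : Summable C := summable_of_nonneg_of_le_eval_abs_mul_exp hC h hϑ hupp
  have ha : 0 < h.leadingCoeff := leadingCoeff_pos_of_eval_natCast_pos hpos
  have hCk : ∀ᶠ k : ℤ in atTop,
      c₁ * (h.leadingCoeff / 2) * (k : ℝ) ^ h.natDegree * exp (-ϑ * k) ≤ C k := by
    filter_upwards [tendsto_intCast_atTop_atTop.eventually
      (eventually_mul_pow_natDegree_le_eval (half_lt_self ha)), eventually_gt_atTop 0]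
      with k hpoly hk
    have habs : |(k : ℝ)| = k := abs_of_pos (by exact_mod_cast hk)
    refine le_trans ?_ (habs ▸ hlow k hk.ne')
    rw [mul_assoc c₁]
    gcongr
  obtain ⟨L, hL⟩ := eventually_atTop.mp (eventually_le_sum_Ioo_mul_sub hC (by positivity) hCk)
  refine ⟨_, by positivity, L, fun l hl => ⟨?_, hL l hl⟩⟩
  exact (summable_mul_sub_of_nonneg hsum hsum hC hC l).sum_le_tsum _
    fun k _ => mul_nonneg (hC k) (hC _)

/-- If `C_l ≍ h(|l|) e^{−ϑ|l|}` with `h` a polynomial of degree `p`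
positive on the positive integers, `ϑ > 0` and `C_0 = 0`, then for all large `l`:
`Ĉ_{l,2} = ∑_k C_k C_{l−k} ≥ ∑_{k=1}^{l−1} C_k C_{l−k} ≥ c₁₂ l^{2p+1} e^{−ϑl}`. -/
theorem conv_lower_bound_exponential
    (C : ℤ → ℝ) (hC : ∀ l, 0 ≤ C l) (hC0 : C 0 = 0)
    (h : Polynomial ℝ) (p : ℕ) (hdeg : h.natDegree = p)
    (hpos : ∀ n : ℕ, 0 < n → 0 < h.eval (n : ℝ))
    (ϑ c₁ c₂ : ℝ) (hϑ : 0 < ϑ) (hc₁ : 0 < c₁) (hc₁₂ : c₁ < c₂)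
    (hlow : ∀ l : ℤ, l ≠ 0 → c₁ * h.eval |(l : ℝ)| * Real.exp (-ϑ * |(l : ℝ)|) ≤ C l)
    (hupp : ∀ l : ℤ, l ≠ 0 → C l ≤ c₂ * h.eval |(l : ℝ)| * Real.exp (-ϑ * |(l : ℝ)|)) :
    ∃ c₁₂ : ℝ, 0 < c₁₂ ∧ ∃ L : ℤ, ∀ l : ℤ, L ≤ l →
      (∑' k : ℤ, C k * C (l - k)) ≥ (∑ k ∈ Finset.Ioo (0 : ℤ) l, C k * C (l - k))
      ∧ (∑ k ∈ Finset.Ioo (0 : ℤ) l, C k * C (l - k))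
          ≥ c₁₂ * (l : ℝ) ^ (2 * p + 1) * Real.exp (-ϑ * (l : ℝ)) :=
  conv_lower_bound_exponential_general C hC h p hdeg hpos ϑ c₁ c₂ hϑ hc₁ hlow hupp
end

section
/- Under the hypotheses of the exponential-decay example (c₁ h(|l|)e^{−ϑ|l|} ≤ C_l ≤ c₂ h(|l|)e^{−ϑ|l|} for l ≠ 0, C₀ = 0, h a positive polynomial of degree p−1, ϑ > 0), there exists c₂₂ > 0 such that for all sufficiently large l: Ĉ_{l,2} = ∑_{k∈ℤ} C_k C_{l−k} ≤ c₂₂ · l^{2p+1} e^{−ϑ l}. Combined with the matching lower bound, for every m ≥ 2 and q ∈ {1,...,m−1} the ratio sup_{λ∈ℤ} Ĉ_{λ,m−q} Ĉ_{l−λ,q} / Ĉ_{l,m} is O(l^{−1}) and hence tends to 0 as l → ∞. -/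
/-!
Write `w_a(x) = (1 + x)^a e^{-ϑx}` (`polyExp ϑ a x`). The hypotheses give `C_k ≤ A w_p(|k|)` for all `k` and
`C_k ≥ α k^p e^{-ϑk}` for large `k`. The excess `|k| + |l - k| - |l|` vanishes for the `|l| + 1`
indices `k` between `0` and `l` and is twice the distance to the nearer endpoint otherwise, so
convolving weights of exponents `a` and `b` costs exactly one extra power of `1 + |l|`; the indices
near `l / 2` give the matching lower bound. By induction `Ĉ_{l,r+1} ≍ l^{r(p+1)+p} e^{-ϑl}`.
In the ratio, each product `Ĉ_{λ,m-q} Ĉ_{l-λ,q}` is `O((1 + l)^n e^{-ϑl})` uniformly in `λ`, because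
`w_n` decreases beyond `n / ϑ`, while `Ĉ_{l,m}` is of order `l^{n+1} e^{-ϑl}`.
-/

open Filter

/-- The `m`-fold (additive) convolution power on `ℤ`:
`Ĉ_{l,m} = ∑_{k₁+⋯+k_m = l} C_{k₁} ⋯ C_{k_m}`. -/
noncomputable def convPowZ (C : ℤ → ℝ) (m : ℕ) (l : ℤ) : ℝ :=
  ∑' σ : {f : Fin m → ℤ // ∑ i, f i = l}, ∏ i, C (σ.1 i)

open Topology

namespace Polynomial

theorem abs_eval_le_sum_abs_coeff_mul (h : ℝ[X]) {x : ℝ} (hx : 0 ≤ x) :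
    |h.eval x| ≤ (∑ i ∈ Finset.range (h.natDegree + 1), |h.coeff i|) * (1 + x) ^ h.natDegree := by
  rw [eval_eq_sum_range, Finset.sum_mul]
  refine (Finset.abs_sum_le_sum_abs _ _).trans (Finset.sum_le_sum fun i hi => ?_)
  rw [abs_mul, abs_of_nonneg (pow_nonneg hx i)]
  gcongr
  calc x ^ i ≤ (1 + x) ^ i := by gcongr; linarith
    _ ≤ (1 + x) ^ h.natDegree :=
        pow_le_pow_right₀ (by linarith) (Nat.lt_succ_iff.1 (Finset.mem_range.1 hi))

theorem exists_pos_eventually_mul_pow_le_eval (h : ℝ[X]) (h0 : h ≠ 0)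
    (hpos : ∀ᶠ n : ℕ in atTop, 0 ≤ h.eval (n : ℝ)) :
    ∃ ε, 0 < ε ∧ ∀ᶠ x in atTop, ε * x ^ h.natDegree ≤ h.eval x := by
  have hlim : Tendsto (fun x => h.eval x / x ^ h.natDegree) atTop (𝓝 h.leadingCoeff) := by
    simpa using div_tendsto_atTop_leadingCoeff_div_of_degree_eq h (X ^ h.natDegree)
      (by rw [degree_X_pow, degree_eq_natDegree h0])
  have hlc : 0 < h.leadingCoeff := by
    refine lt_of_le_of_ne ?_ (leadingCoeff_ne_zero.2 h0).symm
    exact ge_of_tendsto (hlim.comp tendsto_natCast_atTop_atTop)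
      (hpos.mono fun n hn => div_nonneg hn (by positivity))
  refine ⟨h.leadingCoeff / 2, by positivity, ?_⟩
  filter_upwards [hlim.eventually_const_lt (half_lt_self hlc), eventually_gt_atTop 0] with x hx hx0
  exact ((lt_div_iff₀ (by positivity)).1 hx).le

end Polynomial

noncomputable def polyExp (ϑ : ℝ) (a : ℕ) (x : ℝ) : ℝ := (1 + x) ^ a * Real.exp (-ϑ * x)

section PolyExp

variable {ϑ x y : ℝ} {a b N : ℕ}

theorem polyExp_nonneg (hx : 0 ≤ x) : 0 ≤ polyExp ϑ a x := by
  unfold polyExp; positivity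

@[simp]
theorem polyExp_zero : polyExp ϑ a 0 = 1 := by
  simp [polyExp]

theorem polyExp_succ : polyExp ϑ (a + 1) x = (1 + x) * polyExp ϑ a x := by
  rw [polyExp, polyExp, pow_succ]; ring

theorem polyExp_mul_polyExp_le (hx : 0 ≤ x) (hy : 0 ≤ y) :
    polyExp ϑ a x * polyExp ϑ b y ≤ polyExp ϑ (a + b) (x + y) := by
  calc polyExp ϑ a x * polyExp ϑ b y
      = (1 + x) ^ a * (1 + y) ^ b * Real.exp (-ϑ * (x + y)) := by
        rw [polyExp, polyExp, mul_add, Real.exp_add]; ring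
    _ ≤ (1 + (x + y)) ^ a * (1 + (x + y)) ^ b * Real.exp (-ϑ * (x + y)) := by
        gcongr <;> linarith
    _ = polyExp ϑ (a + b) (x + y) := by rw [polyExp, pow_add]

theorem polyExp_add_le_mul (hx : 0 ≤ x) (hy : 0 ≤ y) :
    polyExp ϑ N (x + y) ≤ polyExp ϑ N x * polyExp ϑ N y := by
  calc polyExp ϑ N (x + y) ≤ ((1 + x) * (1 + y)) ^ N * Real.exp (-ϑ * (x + y)) := by
        unfold polyExp; gcongr; nlinarith
    _ = polyExp ϑ N x * polyExp ϑ N y := by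
        rw [polyExp, polyExp, mul_pow, mul_add, Real.exp_add]; ring

theorem polyExp_two_mul_le (hϑ : 0 ≤ ϑ) (hy : 0 ≤ y) :
    polyExp ϑ N (2 * y) ≤ 2 ^ N * polyExp ϑ N y := by
  calc polyExp ϑ N (2 * y) ≤ (2 * (1 + y)) ^ N * Real.exp (-ϑ * y) := by
        unfold polyExp; gcongr ?_ ^ N * Real.exp ?_
        · linarith
        · nlinarith
    _ = 2 ^ N * polyExp ϑ N y := by rw [polyExp, mul_pow, mul_assoc]

theorem polyExp_le_two_pow_mul (hx : 1 ≤ x) :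
    polyExp ϑ N x ≤ 2 ^ N * x ^ N * Real.exp (-ϑ * x) := by
  rw [polyExp, ← mul_pow]; gcongr; linarith

theorem polyExp_le_of_le (hx : 0 ≤ x) (hN : (N : ℝ) ≤ ϑ * (1 + x)) (hxy : x ≤ y) :
    polyExp ϑ N y ≤ polyExp ϑ N x := by
  have h1x : 0 < 1 + x := by linarith
  have hbase : 1 + y ≤ (1 + x) * Real.exp ((y - x) / (1 + x)) := by
    calc 1 + y = (1 + x) * ((y - x) / (1 + x) + 1) := by field_simp; ring
      _ ≤ (1 + x) * Real.exp ((y - x) / (1 + x)) := by gcongr; exact Real.add_one_le_exp _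
  have hexp : N * ((y - x) / (1 + x)) ≤ ϑ * (y - x) := by
    rw [mul_div_assoc', div_le_iff₀ h1x]; nlinarith
  calc polyExp ϑ N y ≤ ((1 + x) * Real.exp ((y - x) / (1 + x))) ^ N * Real.exp (-ϑ * y) := by
        unfold polyExp; gcongr; linarith
    _ = (1 + x) ^ N * Real.exp (N * ((y - x) / (1 + x)) - ϑ * y) := by
        rw [mul_pow, ← Real.exp_nat_mul, mul_assoc, ← Real.exp_add]; ring_nf
    _ ≤ polyExp ϑ N x := by
        unfold polyExp; gcongr; linarith

theorem summable_polyExp_natCast (hϑ : 0 < ϑ) (N : ℕ) :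
    Summable fun n : ℕ => polyExp ϑ N n := by
  refine (((summable_nat_add_iff 1).2 (Real.summable_pow_mul_exp_neg_nat_mul N hϑ)).mul_left
    (Real.exp ϑ)).congr fun n => ?_
  rw [polyExp]
  push_cast
  rw [show -ϑ * ((n : ℝ) + 1) = -ϑ * n + -ϑ by ring, Real.exp_add, Real.exp_neg]
  field_simp
  ring

theorem summable_polyExp_abs (hϑ : 0 < ϑ) (N : ℕ) :
    Summable fun k : ℤ => polyExp ϑ N |(k : ℝ)| :=
  .of_nat_of_neg (by simpa using summable_polyExp_natCast hϑ N)
    (by simpa using summable_polyExp_natCast hϑ N)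

end PolyExp

theorem abs_add_abs_sub_eq_or (x y : ℝ) :
    |x| + |y - x| = |y| ∨ |x| + |y - x| = |y| + 2 * |x| ∨ |x| + |y - x| = |y| + 2 * |y - x| := by
  rcases abs_cases x with ⟨hx, _⟩ | ⟨hx, _⟩ <;>
    rcases abs_cases (y - x) with ⟨hyx, _⟩ | ⟨hyx, _⟩ <;>
    rcases abs_cases y with ⟨hy, _⟩ | ⟨hy, _⟩ <;> rw [hx, hyx, hy] <;>
    first | (left; linarith) | (right; left; linarith) | (right; right; linarith)

theorem polyExp_mul_polyExp_sub_le {ϑ : ℝ} {a b : ℕ} (hϑ : 0 ≤ ϑ) (x y : ℝ) :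
    polyExp ϑ a |x| * polyExp ϑ b |y - x| ≤ polyExp ϑ (a + b) |y| *
      ((if |x| ≤ |y| then 1 else 0) +
        2 ^ (a + b) * (polyExp ϑ (a + b) |x| + polyExp ϑ (a + b) |y - x|)) := by
  set N := a + b
  have hP : ∀ z, 0 ≤ polyExp ϑ N |z| := fun z => polyExp_nonneg (abs_nonneg z)
  have hfar : ∀ z, polyExp ϑ N (|y| + 2 * |z|) ≤ polyExp ϑ N |y| * (2 ^ N * polyExp ϑ N |z|) :=
    fun z => (polyExp_add_le_mul (abs_nonneg y) (by positivity)).trans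
      (mul_le_mul_of_nonneg_left (polyExp_two_mul_le hϑ (abs_nonneg z)) (hP y))
  have hite : 0 ≤ (if |x| ≤ |y| then (1 : ℝ) else 0) := by positivity
  have hx := mul_nonneg (pow_nonneg zero_le_two N) (hP x)
  have hyx := mul_nonneg (pow_nonneg zero_le_two N) (hP (y - x))
  refine (polyExp_mul_polyExp_le (abs_nonneg x) (abs_nonneg (y - x))).trans ?_
  rcases abs_add_abs_sub_eq_or x y with h | h | h <;> rw [h]
  · rw [if_pos (by linarith [abs_nonneg (y - x)])]
    nlinarith [hP y]
  · refine (hfar x).trans (mul_le_mul_of_nonneg_left ?_ (hP y))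
    linarith
  · refine (hfar (y - x)).trans (mul_le_mul_of_nonneg_left ?_ (hP y))
    linarith

theorem hasSum_ite_abs_le (l : ℤ) :
    HasSum (fun k : ℤ => if |(k : ℝ)| ≤ |(l : ℝ)| then (1 : ℝ) else 0) (2 * |(l : ℝ)| + 1) := by
  have hmem : ∀ k : ℤ, k ∈ Finset.Icc (-|l|) |l| ↔ |(k : ℝ)| ≤ |(l : ℝ)| := fun k => by
    rw [Finset.mem_Icc, ← abs_le]; exact_mod_cast Iff.rfl
  have : HasSum (fun k : ℤ => if |(k : ℝ)| ≤ |(l : ℝ)| then (1 : ℝ) else 0)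
      (∑ k ∈ Finset.Icc (-|l|) |l|, if |(k : ℝ)| ≤ |(l : ℝ)| then (1 : ℝ) else 0) :=
    hasSum_sum_of_ne_finset_zero fun k hk => if_neg (mt (hmem k).2 hk)
  convert this using 1
  rw [Finset.sum_ite_of_true fun k hk => (hmem k).1 hk, Finset.sum_const, nsmul_one,
    ← Int.cast_natCast, Int.card_Icc_of_le _ _ (by linarith [abs_nonneg l])]
  push_cast
  ring

theorem summable_conv_and_tsum_le {ϑ A B : ℝ} {a b : ℕ} {f g : ℤ → ℝ} (hϑ : 0 < ϑ)
    (hA : 0 ≤ A) (hB : 0 ≤ B) (hf0 : ∀ k, 0 ≤ f k) (hg0 : ∀ k, 0 ≤ g k)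
    (hf : ∀ k, f k ≤ A * polyExp ϑ a |(k : ℝ)|) (hg : ∀ k, g k ≤ B * polyExp ϑ b |(k : ℝ)|) :
    ∃ M, 0 < M ∧ ∀ l : ℤ, Summable (fun k => f k * g (l - k)) ∧
      ∑' k, f k * g (l - k) ≤ M * polyExp ϑ (a + b + 1) |(l : ℝ)| := by
  set N := a + b
  set S := ∑' k : ℤ, polyExp ϑ N |(k : ℝ)|
  have hS : HasSum (fun k : ℤ => polyExp ϑ N |(k : ℝ)|) S := (summable_polyExp_abs hϑ N).hasSum
  have hS0 : 0 ≤ S := hS.nonneg fun k => polyExp_nonneg (abs_nonneg _)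
  refine ⟨A * B * (2 + 2 ^ (N + 1) * S) + 1, by positivity, fun l => ?_⟩
  set L := |(l : ℝ)|
  have hmajor : HasSum (fun k : ℤ => A * B * (polyExp ϑ N L * ((if |(k : ℝ)| ≤ L then 1 else 0) +
      2 ^ N * (polyExp ϑ N |(k : ℝ)| + polyExp ϑ N |(l : ℝ) - k|))))
      (A * B * (polyExp ϑ N L * (2 * L + 1 + 2 ^ N * (S + S)))) := by
    have hS' : HasSum (fun k : ℤ => polyExp ϑ N |(l : ℝ) - k|) S :=
      by simpa [Function.comp_def] using (Equiv.subLeft l).hasSum_iff.2 hS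
    exact (((hasSum_ite_abs_le l).add ((hS.add hS').mul_left _)).mul_left _).mul_left _
  have hle : ∀ k, f k * g (l - k) ≤ A * B * (polyExp ϑ N L * ((if |(k : ℝ)| ≤ L then 1 else 0) +
      2 ^ N * (polyExp ϑ N |(k : ℝ)| + polyExp ϑ N |(l : ℝ) - k|))) := fun k => by
    calc f k * g (l - k) ≤ A * polyExp ϑ a |(k : ℝ)| * (B * polyExp ϑ b |(l : ℝ) - k|) := by
          refine mul_le_mul (hf k) ?_ (hg0 _) (mul_nonneg hA (polyExp_nonneg (abs_nonneg _)))
          exact_mod_cast hg (l - k)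
      _ = A * B * (polyExp ϑ a |(k : ℝ)| * polyExp ϑ b |(l : ℝ) - k|) := by ring
      _ ≤ _ := mul_le_mul_of_nonneg_left (polyExp_mul_polyExp_sub_le hϑ.le _ _) (mul_nonneg hA hB)
  have hsum : Summable fun k => f k * g (l - k) :=
    hmajor.summable.of_nonneg_of_le (fun k => mul_nonneg (hf0 k) (hg0 _)) hle
  refine ⟨hsum, (hasSum_le hle hsum.hasSum hmajor).trans ?_⟩
  have hL : 0 ≤ L := abs_nonneg _
  have hP : 0 ≤ polyExp ϑ N L := polyExp_nonneg hL
  have hcount : 2 * L + 1 + 2 ^ N * (S + S) ≤ (1 + L) * (2 + 2 ^ (N + 1) * S) := by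
    have : 0 ≤ 2 ^ N * S * L := by positivity
    rw [pow_succ]; nlinarith
  calc A * B * (polyExp ϑ N L * (2 * L + 1 + 2 ^ N * (S + S)))
      ≤ A * B * (2 + 2 ^ (N + 1) * S) * polyExp ϑ (N + 1) L := by
        rw [polyExp_succ]
        have := mul_le_mul_of_nonneg_left hcount hP
        have hAB : 0 ≤ A * B := mul_nonneg hA hB
        nlinarith
    _ ≤ (A * B * (2 + 2 ^ (N + 1) * S) + 1) * polyExp ϑ (N + 1) L := by
        nlinarith [polyExp_nonneg (ϑ := ϑ) (a := N + 1) hL]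

theorem eventually_le_tsum_conv {ϑ α β : ℝ} {a b : ℕ} {f g : ℤ → ℝ} (hα : 0 < α) (hβ : 0 < β)
    (hf0 : ∀ k, 0 ≤ f k) (hg0 : ∀ k, 0 ≤ g k) (hs : ∀ l, Summable fun k => f k * g (l - k))
    (hf : ∀ᶠ k : ℤ in atTop, α * (k : ℝ) ^ a * Real.exp (-ϑ * k) ≤ f k)
    (hg : ∀ᶠ k : ℤ in atTop, β * (k : ℝ) ^ b * Real.exp (-ϑ * k) ≤ g k) :
    ∃ γ, 0 < γ ∧ ∀ᶠ l : ℤ in atTop,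
      γ * (l : ℝ) ^ (a + b + 1) * Real.exp (-ϑ * l) ≤ ∑' k, f k * g (l - k) := by
  obtain ⟨K, hK⟩ := eventually_atTop.1 (hf.and hg)
  refine ⟨α * β / 4 ^ (a + b + 1), by positivity,
    eventually_atTop.2 ⟨max 8 (3 * K), fun l hl => ?_⟩⟩
  have hl8 : 8 ≤ l := le_of_max_le_left hl
  have hlK : 3 * K ≤ l := le_of_max_le_right hl
  set c := α * β * ((l : ℝ) / 4) ^ (a + b) * Real.exp (-ϑ * l)
  set s := Finset.Icc (l / 3) (2 * (l / 3))
  have hterm : ∀ k ∈ s, c ≤ f k * g (l - k) := by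
    intro k hk
    rw [Finset.mem_Icc] at hk
    have hk4 : (l : ℝ) / 4 ≤ k := by
      rw [div_le_iff₀ (by norm_num)]; exact_mod_cast (by omega : l ≤ k * 4)
    have hlk4 : (l : ℝ) / 4 ≤ ((l - k : ℤ) : ℝ) := by
      rw [div_le_iff₀ (by norm_num)]; exact_mod_cast (by omega : l ≤ (l - k) * 4)
    have hl0 : (0 : ℝ) ≤ l / 4 := by positivity
    have hfk : 0 ≤ α * (k : ℝ) ^ a * Real.exp (-ϑ * k) :=
      mul_nonneg (mul_nonneg hα.le (pow_nonneg (hl0.trans hk4) a)) (Real.exp_pos _).le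
    have hglk : 0 ≤ β * ((l - k : ℤ) : ℝ) ^ b * Real.exp (-ϑ * ((l - k : ℤ) : ℝ)) :=
      mul_nonneg (mul_nonneg hβ.le (pow_nonneg (hl0.trans hlk4) b)) (Real.exp_pos _).le
    calc c = α * ((l : ℝ) / 4) ^ a * Real.exp (-ϑ * k) *
          (β * ((l : ℝ) / 4) ^ b * Real.exp (-ϑ * ((l - k : ℤ) : ℝ))) := by
          simp only [c, pow_add]; push_cast
          rw [show -ϑ * (l : ℝ) = -ϑ * k + -ϑ * (l - k) by ring, Real.exp_add]; ring
      _ ≤ α * (k : ℝ) ^ a * Real.exp (-ϑ * k) *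
          (β * ((l - k : ℤ) : ℝ) ^ b * Real.exp (-ϑ * ((l - k : ℤ) : ℝ))) := by gcongr
      _ ≤ f k * g (l - k) :=
          mul_le_mul (hK k (by omega)).1 (hK (l - k) (by omega)).2 hglk (hf0 k)
  have hcard : (l : ℝ) / 4 ≤ s.card := by
    rw [div_le_iff₀ (by norm_num)]
    have : (s.card : ℤ) = 2 * (l / 3) + 1 - l / 3 := Int.card_Icc_of_le _ _ (by omega)
    exact_mod_cast (by omega : l ≤ (s.card : ℤ) * 4)
  calc α * β / 4 ^ (a + b + 1) * (l : ℝ) ^ (a + b + 1) * Real.exp (-ϑ * l)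
      = (l : ℝ) / 4 * c := by simp only [c]; rw [div_pow, pow_succ, pow_succ]; field_simp
    _ ≤ s.card * c := by gcongr
    _ ≤ ∑ k ∈ s, f k * g (l - k) := by
        rw [← nsmul_eq_mul]; exact Finset.card_nsmul_le_sum s _ c hterm
    _ ≤ ∑' k, f k * g (l - k) := (hs l).sum_le_tsum s fun k _ => mul_nonneg (hf0 k) (hg0 _)

def finSnocFiberEquiv (r : ℕ) (l : ℤ) : (Fin r → ℤ) ≃ {f : Fin (r + 1) → ℤ // ∑ i, f i = l} where
  toFun g := ⟨Fin.snoc g (l - ∑ i, g i), by simp [Fin.sum_univ_castSucc]⟩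
  invFun f := Fin.init f.1
  left_inv g := Fin.init_snoc _ _
  right_inv f := by
    have hf := f.2
    rw [Fin.sum_univ_castSucc] at hf
    ext1
    conv_rhs => rw [← Fin.snoc_init_self f.1]
    simp only [Fin.init]
    exact congrArg _ (by linarith)

section ConvPow

variable {C : ℤ → ℝ}

def convPowTerm (C : ℤ → ℝ) (m : ℕ) (l : ℤ) (σ : {f : Fin m → ℤ // ∑ i, f i = l}) : ℝ :=
  ∏ i, C (σ.1 i)

theorem convPowTerm_finSnocFiberEquiv (r : ℕ) (l : ℤ) (g : Fin r → ℤ) :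
    convPowTerm C (r + 1) l (finSnocFiberEquiv r l g) = (∏ i, C (g i)) * C (l - ∑ i, g i) := by
  simp [convPowTerm, finSnocFiberEquiv, Fin.prod_univ_castSucc]

theorem convPowZ_nonneg (hC : ∀ k, 0 ≤ C k) (m : ℕ) (l : ℤ) : 0 ≤ convPowZ C m l :=
  tsum_nonneg fun _ => Finset.prod_nonneg fun _ _ => hC _

theorem convPowZ_one (l : ℤ) : convPowZ C 1 l = C l := by
  rw [convPowZ, ← (finSnocFiberEquiv 0 l).tsum_eq]
  simp [finSnocFiberEquiv, Fin.snoc]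

theorem summable_convPowTerm_one (l : ℤ) : Summable (convPowTerm C 1 l) :=
  have := Finite.of_equiv _ (finSnocFiberEquiv 0 l)
  .of_finite

theorem hasSum_convPowTerm_succ (hC : ∀ k, 0 ≤ C k) {r : ℕ} {l : ℤ}
    (hfib : ∀ k, Summable (convPowTerm C r k))
    (hout : Summable fun k => convPowZ C r k * C (l - k)) :
    HasSum (convPowTerm C (r + 1) l) (∑' k, convPowZ C r k * C (l - k)) := by
  set e := (Equiv.sigmaFiberEquiv fun g : Fin r → ℤ => ∑ i, g i).trans (finSnocFiberEquiv r l)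
  have hcomp : convPowTerm C (r + 1) l ∘ e = fun x => convPowTerm C r x.1 x.2 * C (l - x.1) := by
    funext ⟨k, g, hg⟩
    simp only [Function.comp_apply, e, Equiv.trans_apply, Equiv.sigmaFiberEquiv_apply,
      convPowTerm_finSnocFiberEquiv, hg]
    rfl
  have hF : Summable fun x : Σ k : ℤ, {g : Fin r → ℤ // ∑ i, g i = k} =>
      convPowTerm C r x.1 x.2 * C (l - x.1) :=
    (summable_sigma_of_nonneg fun x => mul_nonneg (Finset.prod_nonneg fun _ _ => hC _) (hC _)).2
      ⟨fun k => (hfib k).mul_right (C (l - k)), hout.congr fun k => tsum_mul_right.symm⟩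
  rw [← e.hasSum_iff, hcomp]
  convert hF.hasSum using 1
  rw [hF.tsum_sigma]
  exact tsum_congr fun k => tsum_mul_right.symm

end ConvPow

theorem eventually_iSup_mul_div_le {ϑ B₁ B₂ β : ℝ} {s t : ℕ} {f g F : ℤ → ℝ} (hϑ : 0 < ϑ)
    (hB₁ : 0 ≤ B₁) (hB₂ : 0 ≤ B₂) (hg0 : ∀ k, 0 ≤ g k)
    (hf : ∀ k, f k ≤ B₁ * polyExp ϑ s |(k : ℝ)|) (hg : ∀ k, g k ≤ B₂ * polyExp ϑ t |(k : ℝ)|)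
    (hβ : 0 < β) (hF : ∀ᶠ l : ℤ in atTop, β * (l : ℝ) ^ (s + t + 1) * Real.exp (-ϑ * l) ≤ F l) :
    ∃ K, ∀ᶠ l : ℤ in atTop, (⨆ lam, f lam * g (l - lam)) / F l ≤ K / l := by
  refine ⟨B₁ * B₂ * 2 ^ (s + t) / β, ?_⟩
  filter_upwards [hF, eventually_ge_atTop 1,
    tendsto_intCast_atTop_atTop.eventually_ge_atTop ((s + t : ℕ) / ϑ)] with l hFl hl1 hlN
  have hl : (1 : ℝ) ≤ l := by exact_mod_cast hl1
  have hN : ((s + t : ℕ) : ℝ) ≤ ϑ * (1 + l) := by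
    rw [div_le_iff₀ hϑ] at hlN; nlinarith
  have hnum : ∀ lam, f lam * g (l - lam) ≤
      B₁ * B₂ * (2 ^ (s + t) * (l : ℝ) ^ (s + t) * Real.exp (-ϑ * l)) := fun lam => by
    have hsplit : (l : ℝ) ≤ |(lam : ℝ)| + |(l : ℝ) - lam| := by
      linarith [le_abs_self (lam : ℝ), le_abs_self ((l : ℝ) - lam)]
    calc f lam * g (l - lam)
        ≤ B₁ * polyExp ϑ s |(lam : ℝ)| * (B₂ * polyExp ϑ t |(l : ℝ) - lam|) := by
          refine mul_le_mul (hf lam) ?_ (hg0 _) (mul_nonneg hB₁ (polyExp_nonneg (abs_nonneg _)))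
          exact_mod_cast hg (l - lam)
      _ = B₁ * B₂ * (polyExp ϑ s |(lam : ℝ)| * polyExp ϑ t |(l : ℝ) - lam|) := by ring
      _ ≤ B₁ * B₂ * polyExp ϑ (s + t) l := by
          gcongr
          exact (polyExp_mul_polyExp_le (abs_nonneg _) (abs_nonneg _)).trans
            (polyExp_le_of_le (by linarith) hN hsplit)
      _ ≤ B₁ * B₂ * (2 ^ (s + t) * (l : ℝ) ^ (s + t) * Real.exp (-ϑ * l)) := by
          gcongr; exact polyExp_le_two_pow_mul hl
  have hden : 0 < β * (l : ℝ) ^ (s + t + 1) * Real.exp (-ϑ * l) := by positivity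
  calc (⨆ lam, f lam * g (l - lam)) / F l
      ≤ B₁ * B₂ * (2 ^ (s + t) * (l : ℝ) ^ (s + t) * Real.exp (-ϑ * l)) /
          (β * (l : ℝ) ^ (s + t + 1) * Real.exp (-ϑ * l)) :=
        div_le_div₀ (by positivity) (ciSup_le hnum) hden hFl
    _ = B₁ * B₂ * 2 ^ (s + t) / β / l := by
        rw [pow_succ]; field_simp

section ExponentialDecay

variable {C : ℤ → ℝ} {h : Polynomial ℝ} {ϑ c A α : ℝ} {p : ℕ}

theorem le_mul_polyExp_of_le_eval (hC0 : C 0 = 0)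
    (hupp : ∀ l : ℤ, l ≠ 0 → C l ≤ c * h.eval |(l : ℝ)| * Real.exp (-ϑ * |(l : ℝ)|)) (k : ℤ) :
    C k ≤ |c| * (∑ i ∈ Finset.range (h.natDegree + 1), |h.coeff i|) *
      polyExp ϑ h.natDegree |(k : ℝ)| := by
  rcases eq_or_ne k 0 with rfl | hk
  · simp only [hC0, Int.cast_zero, abs_zero, polyExp_zero, mul_one]
    positivity
  calc C k ≤ c * h.eval |(k : ℝ)| * Real.exp (-ϑ * |(k : ℝ)|) := hupp k hk
    _ ≤ |c| * ((∑ i ∈ Finset.range (h.natDegree + 1), |h.coeff i|) *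
          (1 + |(k : ℝ)|) ^ h.natDegree) * Real.exp (-ϑ * |(k : ℝ)|) := by
        gcongr ?_ * _
        refine (le_abs_self _).trans ?_
        rw [abs_mul]
        exact mul_le_mul_of_nonneg_left (h.abs_eval_le_sum_abs_coeff_mul (abs_nonneg _))
          (abs_nonneg c)
    _ = _ := by rw [polyExp]; ring

theorem eventually_le_of_le_eval {ε : ℝ} (hc : 0 < c)
    (hε : ∀ᶠ x in atTop, ε * x ^ h.natDegree ≤ h.eval x)
    (hlow : ∀ l : ℤ, l ≠ 0 → c * h.eval |(l : ℝ)| * Real.exp (-ϑ * |(l : ℝ)|) ≤ C l) :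
    ∀ᶠ k : ℤ in atTop, c * ε * (k : ℝ) ^ h.natDegree * Real.exp (-ϑ * k) ≤ C k := by
  filter_upwards [tendsto_intCast_atTop_atTop.eventually hε, eventually_gt_atTop 0] with k hk hk0
  have habs : |(k : ℝ)| = k := abs_of_pos (by exact_mod_cast hk0)
  calc c * ε * (k : ℝ) ^ h.natDegree * Real.exp (-ϑ * k)
      ≤ c * h.eval (k : ℝ) * Real.exp (-ϑ * k) := by
        rw [mul_assoc c]; gcongr
    _ ≤ C k := by simpa only [habs] using hlow k hk0.ne'

theorem convPowZ_upper_bound (hC : ∀ k, 0 ≤ C k) (hϑ : 0 < ϑ) (hA : 0 ≤ A)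
    (hCA : ∀ k, C k ≤ A * polyExp ϑ p |(k : ℝ)|) (r : ℕ) :
    (∀ l, Summable (convPowTerm C (r + 1) l)) ∧
      ∃ B, 0 ≤ B ∧ ∀ l, convPowZ C (r + 1) l ≤ B * polyExp ϑ (r * (p + 1) + p) |(l : ℝ)| := by
  induction r with
  | zero => exact ⟨summable_convPowTerm_one, A, hA, by simpa [convPowZ_one] using hCA⟩
  | succ r ih =>
    obtain ⟨hfib, B, hB, hCB⟩ := ih
    obtain ⟨M, hM, hconv⟩ :=
      summable_conv_and_tsum_le hϑ hB hA (convPowZ_nonneg hC _) hC hCB hCA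
    have hsucc l := hasSum_convPowTerm_succ hC hfib (hconv l).1
    refine ⟨fun l => (hsucc l).summable, M, hM.le, fun l => ?_⟩
    rw [show convPowZ C (r + 1 + 1) l = _ from (hsucc l).tsum_eq]
    convert (hconv l).2 using 3
    ring

theorem convPowZ_lower_bound (hC : ∀ k, 0 ≤ C k) (hϑ : 0 < ϑ) (hA : 0 ≤ A)
    (hCA : ∀ k, C k ≤ A * polyExp ϑ p |(k : ℝ)|) (hα : 0 < α)
    (hCα : ∀ᶠ k : ℤ in atTop, α * (k : ℝ) ^ p * Real.exp (-ϑ * k) ≤ C k) (r : ℕ) :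
    ∃ β, 0 < β ∧ ∀ᶠ l : ℤ in atTop,
      β * (l : ℝ) ^ (r * (p + 1) + p) * Real.exp (-ϑ * l) ≤ convPowZ C (r + 1) l := by
  induction r with
  | zero => exact ⟨α, hα, by simpa [convPowZ_one] using hCα⟩
  | succ r ih =>
    obtain ⟨β, hβ, hCβ⟩ := ih
    obtain ⟨hfib, B, hB, hCB⟩ := convPowZ_upper_bound hC hϑ hA hCA r
    obtain ⟨_, -, hconv⟩ := summable_conv_and_tsum_le hϑ hB hA (convPowZ_nonneg hC _) hC hCB hCA
    obtain ⟨γ, hγ, hγl⟩ :=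
      eventually_le_tsum_conv hβ hα (convPowZ_nonneg hC _) hC (fun l => (hconv l).1) hCβ hCα
    refine ⟨γ, hγ, hγl.mono fun l hl => ?_⟩
    rw [show convPowZ C (r + 1 + 1) l = _ from
      (hasSum_convPowTerm_succ hC hfib (hconv l).1).tsum_eq]
    convert hl using 3
    ring

end ExponentialDecay

theorem conv_upper_bound_exponential_and_CLT_ratio_general
    (C : ℤ → ℝ) (hC : ∀ l, 0 ≤ C l) (hC0 : C 0 = 0)
    (h : Polynomial ℝ) (p : ℕ) (hdeg : h.natDegree = p)
    (hpos : ∀ n : ℕ, 0 < n → 0 < h.eval (n : ℝ))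
    (ϑ c₁ c₂ : ℝ) (hϑ : 0 < ϑ) (hc₁ : 0 < c₁)
    (hlow : ∀ l : ℤ, l ≠ 0 → c₁ * h.eval |(l : ℝ)| * Real.exp (-ϑ * |(l : ℝ)|) ≤ C l)
    (hupp : ∀ l : ℤ, l ≠ 0 → C l ≤ c₂ * h.eval |(l : ℝ)| * Real.exp (-ϑ * |(l : ℝ)|)) :
    (∃ c₂₂ : ℝ, 0 < c₂₂ ∧ ∃ L : ℤ, ∀ l : ℤ, L ≤ l →
      (∑' k : ℤ, C k * C (l - k)) ≤ c₂₂ * (l : ℝ) ^ (2 * p + 1) * Real.exp (-ϑ * (l : ℝ)))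
    ∧ ∀ m q : ℕ, 2 ≤ m → 1 ≤ q → q ≤ m - 1 →
        (∃ K : ℝ, ∀ᶠ l : ℤ in atTop,
          (⨆ lam : ℤ, convPowZ C (m - q) lam * convPowZ C q (l - lam)) / convPowZ C m l
            ≤ K / (l : ℝ))
        ∧ Tendsto
            (fun l : ℤ =>
              (⨆ lam : ℤ, convPowZ C (m - q) lam * convPowZ C q (l - lam)) / convPowZ C m l)
            atTop (nhds 0) := by
  subst hdeg
  have h0 : h ≠ 0 := fun h0 => by simpa [h0] using hpos 1 one_pos
  obtain ⟨ε, hε, hεh⟩ := h.exists_pos_eventually_mul_pow_le_eval h0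
    (eventually_atTop.2 ⟨1, fun n hn => (hpos n hn).le⟩)
  have hCA := le_mul_polyExp_of_le_eval hC0 hupp
  have hCα := eventually_le_of_le_eval hc₁ hεh hlow
  have hA : 0 ≤ |c₂| * ∑ i ∈ Finset.range (h.natDegree + 1), |h.coeff i| := by positivity
  refine ⟨?_, fun m q hm hq hqm => ?_⟩
  · obtain ⟨M, hM, hconv⟩ := summable_conv_and_tsum_le hϑ hA hA hC hC hCA hCA
    refine ⟨M * 2 ^ (2 * h.natDegree + 1), by positivity, 1, fun l hl => (hconv l).2.trans ?_⟩
    have hl' : (1 : ℝ) ≤ l := by exact_mod_cast hl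
    rw [abs_of_pos (by linarith), ← two_mul, mul_assoc M, mul_assoc M]
    gcongr
    exact polyExp_le_two_pow_mul hl'
  obtain ⟨r, rfl⟩ : ∃ r, q = r + 1 := ⟨q - 1, by omega⟩
  obtain ⟨s, rfl⟩ : ∃ s, m = r + 1 + s + 1 := ⟨m - (r + 1) - 1, by omega⟩
  rw [show r + 1 + s + 1 - (r + 1) = s + 1 by omega]
  obtain ⟨-, B₁, hB₁, h₁⟩ := convPowZ_upper_bound hC hϑ hA hCA s
  obtain ⟨-, B₂, hB₂, h₂⟩ := convPowZ_upper_bound hC hϑ hA hCA r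
  obtain ⟨β, hβ, hβm⟩ := convPowZ_lower_bound hC hϑ hA hCA (by positivity) hCα (r + 1 + s)
  rw [show (r + 1 + s) * (h.natDegree + 1) + h.natDegree =
    s * (h.natDegree + 1) + h.natDegree + (r * (h.natDegree + 1) + h.natDegree) + 1 by ring] at hβm
  obtain ⟨K, hK⟩ := eventually_iSup_mul_div_le hϑ hB₁ hB₂ (convPowZ_nonneg hC _) h₁ h₂ hβ hβm
  refine ⟨⟨K, hK⟩, squeeze_zero' (.of_forall fun l => ?_) hK
    (tendsto_const_nhds.div_atTop tendsto_intCast_atTop_atTop)⟩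
  exact div_nonneg (Real.iSup_nonneg fun lam =>
    mul_nonneg (convPowZ_nonneg hC _ _) (convPowZ_nonneg hC _ _)) (convPowZ_nonneg hC _ _)

/-- Under exponential spectral decay `C_l ≍ h(|l|)e^{−ϑ|l|}` (`h` of
degree `p`, positive on positive integers, `C_0 = 0`), one has
`Ĉ_{l,2} ≤ c₂₂ l^{2p+1} e^{−ϑl}` for large `l`, and for every `m ≥ 2`, `1 ≤ q ≤ m−1`,
the ratio `sup_λ Ĉ_{λ,m−q} Ĉ_{l−λ,q} / Ĉ_{l,m}` is `O(1/l)` and tends to `0`. -/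
theorem conv_upper_bound_exponential_and_CLT_ratio
    (C : ℤ → ℝ) (hC : ∀ l, 0 ≤ C l) (hC0 : C 0 = 0)
    (h : Polynomial ℝ) (p : ℕ) (hdeg : h.natDegree = p)
    (hpos : ∀ n : ℕ, 0 < n → 0 < h.eval (n : ℝ))
    (ϑ c₁ c₂ : ℝ) (hϑ : 0 < ϑ) (hc₁ : 0 < c₁) (hc₁₂ : c₁ < c₂)
    (hlow : ∀ l : ℤ, l ≠ 0 → c₁ * h.eval |(l : ℝ)| * Real.exp (-ϑ * |(l : ℝ)|) ≤ C l)
    (hupp : ∀ l : ℤ, l ≠ 0 → C l ≤ c₂ * h.eval |(l : ℝ)| * Real.exp (-ϑ * |(l : ℝ)|)) :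
    (∃ c₂₂ : ℝ, 0 < c₂₂ ∧ ∃ L : ℤ, ∀ l : ℤ, L ≤ l →
      (∑' k : ℤ, C k * C (l - k)) ≤ c₂₂ * (l : ℝ) ^ (2 * p + 1) * Real.exp (-ϑ * (l : ℝ)))
    ∧ ∀ m q : ℕ, 2 ≤ m → 1 ≤ q → q ≤ m - 1 →
        (∃ K : ℝ, ∀ᶠ l : ℤ in atTop,
          (⨆ lam : ℤ, convPowZ C (m - q) lam * convPowZ C q (l - lam)) / convPowZ C m l
            ≤ K / (l : ℝ))
        ∧ Tendsto
            (fun l : ℤ =>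
              (⨆ lam : ℤ, convPowZ C (m - q) lam * convPowZ C q (l - lam)) / convPowZ C m l)
            atTop (nhds 0) :=
  conv_upper_bound_exponential_and_CLT_ratio_general C hC hC0 h p hdeg hpos ϑ c₁ c₂ hϑ hc₁ hlow hupp
end
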